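/- Let a ∈ ℂ with Im a > 0 and Re a ≤ 0, and let b > 0. Then Re ∫_{1}^{bi} √(p_a(z)) dz ≠ 0, where the integral is taken along the path [1,0] ∪ [0, bi] with arguments chosen in [0, 2π) and square roots with argument in [0, π). Concretely, Re ∫₀¹ √((1-t²)(a-t)) dt > 0 and Im ∫₀¹ √((1+b²t²)(a - ibt)) dt > 0, so their combination -Re∫₀¹√((1-t²)(a-t))dt - b·Im∫₀¹√((1+b²t²)(a-ibt))dt is strictly negative. -/

import Mathlib

/-! For `Im z > 0` the branch `sqrtA` has argument `arg z / 2 ∈ (0, π/2)`, so both its real and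
imaginary parts are positive, while `Im (sqrtA z) ≥ 0` for every `z`. The first integrand has
`Im = (1 - t²) Im a > 0` on `(0, 1)`; the second has `Im = (1 + b²t²)(Im a - b t)`, positive for
`t < Im a / b`, so its nonnegative imaginary part is positive on an initial subinterval. -/

open Complex Set intervalIntegral

noncomputable section

/-- The argument of `z` chosen in `[0, 2π)`. -/
def arg2 (z : ℂ) : ℝ := if 0 ≤ z.arg then z.arg else z.arg + 2 * Real.pi

/-- The branch of the square root with `arg √z ∈ [0, π)`. -/
def sqrtA (z : ℂ) : ℂ :=
  (Real.sqrt ‖z‖ : ℂ) * Complex.exp (Complex.I * arg2 z / 2)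

open MeasureTheory Filter

lemma arg2_nonneg (z : ℂ) : 0 ≤ arg2 z := by
  unfold arg2; split_ifs with h
  · exact h
  · linarith [neg_pi_lt_arg z]

lemma arg2_lt_two_pi (z : ℂ) : arg2 z < 2 * Real.pi := by
  unfold arg2; split_ifs <;> linarith [arg_le_pi z, Real.pi_pos]

lemma arg2_mem_Ioo_of_im_pos {z : ℂ} (hz : 0 < z.im) : arg2 z ∈ Ioo 0 Real.pi := by
  have h0 : 0 ≤ z.arg := arg_nonneg_iff.2 hz.le
  rw [arg2, if_pos h0]
  exact ⟨h0.lt_of_ne fun h => hz.ne' (arg_eq_zero_iff.1 h.symm).2,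
    arg_lt_pi_iff.2 (Or.inr hz.ne')⟩

lemma measurable_arg2 : Measurable arg2 :=
  Measurable.ite (measurableSet_le measurable_const measurable_arg) measurable_arg
    (measurable_arg.add_const _)

lemma measurable_sqrtA : Measurable sqrtA := by
  unfold sqrtA
  have := measurable_arg2
  fun_prop

lemma exp_I_mul_arg2_div_two (z : ℂ) :
    exp (I * arg2 z / 2) = exp (((arg2 z / 2 : ℝ) : ℂ) * I) := by
  push_cast; ring_nf

lemma norm_sqrtA (z : ℂ) : ‖sqrtA z‖ = Real.sqrt ‖z‖ := by
  rw [sqrtA, exp_I_mul_arg2_div_two, norm_mul, norm_exp_ofReal_mul_I, mul_one, norm_real,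
    Real.norm_of_nonneg (Real.sqrt_nonneg _)]

lemma sqrtA_re (z : ℂ) : (sqrtA z).re = Real.sqrt ‖z‖ * Real.cos (arg2 z / 2) := by
  rw [sqrtA, exp_I_mul_arg2_div_two, re_ofReal_mul, exp_ofReal_mul_I_re]

lemma sqrtA_im (z : ℂ) : (sqrtA z).im = Real.sqrt ‖z‖ * Real.sin (arg2 z / 2) := by
  rw [sqrtA, exp_I_mul_arg2_div_two, im_ofReal_mul, exp_ofReal_mul_I_im]

lemma sqrtA_im_nonneg (z : ℂ) : 0 ≤ (sqrtA z).im := by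
  rw [sqrtA_im]
  exact mul_nonneg (Real.sqrt_nonneg _) (Real.sin_nonneg_of_nonneg_of_le_pi
    (by linarith [arg2_nonneg z]) (by linarith [arg2_lt_two_pi z]))

lemma sqrt_norm_pos_of_im_pos {z : ℂ} (hz : 0 < z.im) : 0 < Real.sqrt ‖z‖ :=
  Real.sqrt_pos.2 (norm_pos_iff.2 fun h => by simp [h] at hz)

lemma sqrtA_re_pos_of_im_pos {z : ℂ} (hz : 0 < z.im) : 0 < (sqrtA z).re := by
  obtain ⟨h0, hπ⟩ := arg2_mem_Ioo_of_im_pos hz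
  rw [sqrtA_re]
  exact mul_pos (sqrt_norm_pos_of_im_pos hz)
    (Real.cos_pos_of_mem_Ioo ⟨by linarith [Real.pi_pos], by linarith⟩)

lemma sqrtA_im_pos_of_im_pos {z : ℂ} (hz : 0 < z.im) : 0 < (sqrtA z).im := by
  obtain ⟨h0, hπ⟩ := arg2_mem_Ioo_of_im_pos hz
  rw [sqrtA_im]
  exact mul_pos (sqrt_norm_pos_of_im_pos hz)
    (Real.sin_pos_of_pos_of_lt_pi (by linarith) (by linarith))

protected lemma IntervalIntegrable.re {f : ℝ → ℂ} {μ : Measure ℝ} {a b : ℝ}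
    (hf : IntervalIntegrable f μ a b) : IntervalIntegrable (fun x => (f x).re) μ a b :=
  ⟨hf.1.re, hf.2.re⟩

protected lemma IntervalIntegrable.im {f : ℝ → ℂ} {μ : Measure ℝ} {a b : ℝ}
    (hf : IntervalIntegrable f μ a b) : IntervalIntegrable (fun x => (f x).im) μ a b :=
  ⟨hf.1.im, hf.2.im⟩

/-- `sqrtA` jumps across `[0, ∞)`, so integrability comes from measurability and a bound rather
than from continuity. -/
lemma intervalIntegrable_sqrtA_comp {γ : ℝ → ℂ} (hγ : Continuous γ) (a b : ℝ) :
    IntervalIntegrable (fun t => sqrtA (γ t)) volume a b := by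
  obtain ⟨M, hM⟩ := isCompact_uIcc.exists_bound_of_continuousOn hγ.continuousOn
  refine (intervalIntegrable_const (c := Real.sqrt M)).mono_fun
    (measurable_sqrtA.comp hγ.measurable).aestronglyMeasurable ?_
  rw [EventuallyLE, ae_restrict_iff' measurableSet_uIoc]
  filter_upwards with t ht
  rw [norm_sqrtA, Real.norm_of_nonneg (Real.sqrt_nonneg _)]
  exact Real.sqrt_le_sqrt (hM t (uIoc_subset_uIcc ht))

lemma intervalIntegral_pos_of_nonneg_of_pos_on_Ioo {f : ℝ → ℝ} {a b c : ℝ}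
    (hf : IntervalIntegrable f volume a b) (hnn : 0 ≤ f) (hac : a < c) (hcb : c ≤ b)
    (hpos : ∀ x ∈ Ioo a c, 0 < f x) : 0 < ∫ x in a..b, f x := by
  rw [integral_pos_iff_support_of_nonneg_ae (Eventually.of_forall hnn) hf]
  refine ⟨hac.trans_le hcb, ?_⟩
  calc (0 : ENNReal) < volume (Ioo a c) := by simpa using hac
    _ ≤ volume (Function.support f ∩ Ioc a b) :=
      measure_mono fun x hx => ⟨(hpos x hx).ne', hx.1, hx.2.le.trans hcb⟩

lemma integral_sqrtA_segment_re_pos {a : ℂ} (ha : 0 < a.im) :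
    0 < (∫ t in (0:ℝ)..1, sqrtA ((1 - (t:ℂ) ^ 2) * (a - t))).re := by
  have hi := intervalIntegrable_sqrtA_comp (γ := fun t : ℝ => (1 - (t:ℂ) ^ 2) * (a - t))
    (by fun_prop) 0 1
  rw [← RCLike.re_to_complex, ← intervalIntegral_re hi]
  refine intervalIntegral_pos_of_pos_on hi.re (fun t ht => sqrtA_re_pos_of_im_pos ?_) one_pos
  have him : ((1 - (t:ℂ) ^ 2) * (a - t)).im = (1 - t ^ 2) * a.im := by
    simp [mul_im, ← ofReal_pow]
  rw [him]
  exact mul_pos (by nlinarith [ht.1, ht.2]) ha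

lemma integral_sqrtA_imagSegment_im_pos {a : ℂ} (ha : 0 < a.im) {b : ℝ} (hb : 0 < b) :
    0 < (∫ t in (0:ℝ)..1,
      sqrtA ((1 + (b:ℂ) ^ 2 * (t:ℂ) ^ 2) * (a - Complex.I * b * t))).im := by
  have hi := intervalIntegrable_sqrtA_comp
    (γ := fun t : ℝ => (1 + (b:ℂ) ^ 2 * (t:ℂ) ^ 2) * (a - Complex.I * b * t)) (by fun_prop) 0 1
  rw [← RCLike.im_to_complex, ← intervalIntegral_im hi]
  refine intervalIntegral_pos_of_nonneg_of_pos_on_Ioo hi.im (fun t => sqrtA_im_nonneg _)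
    (lt_min (div_pos ha hb) one_pos) (min_le_right _ _) fun t ht => sqrtA_im_pos_of_im_pos ?_
  have him : ((1 + (b:ℂ) ^ 2 * (t:ℂ) ^ 2) * (a - Complex.I * b * t)).im
      = (1 + b ^ 2 * t ^ 2) * (a.im - b * t) := by
    simp [mul_im, ← ofReal_pow]
  have hbt : t * b < a.im := (lt_div_iff₀ hb).1 (ht.2.trans_le (min_le_left _ _))
  rw [him]
  exact mul_pos (by positivity) (by linarith)

theorem stmt14_general (a : ℂ) (ha1 : 0 < a.im) (b : ℝ) (hb : 0 < b) :
    0 < (∫ t in (0:ℝ)..1, sqrtA ((1 - (t:ℂ) ^ 2) * (a - t))).re ∧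
    0 < (∫ t in (0:ℝ)..1,
        sqrtA ((1 + (b:ℂ) ^ 2 * (t:ℂ) ^ 2) * (a - Complex.I * b * t))).im ∧
    -- hence `Re ∫_1^{bi} √(p_a) dz` (over the path `[1,0] ∪ [0,bi]`) is negative, nonzero
    (-(∫ t in (0:ℝ)..1, sqrtA ((1 - (t:ℂ) ^ 2) * (a - t))).re -
        b * (∫ t in (0:ℝ)..1,
          sqrtA ((1 + (b:ℂ) ^ 2 * (t:ℂ) ^ 2) * (a - Complex.I * b * t))).im < 0) ∧
    (-(∫ t in (0:ℝ)..1, sqrtA ((1 - (t:ℂ) ^ 2) * (a - t))).re -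
        b * (∫ t in (0:ℝ)..1,
          sqrtA ((1 + (b:ℂ) ^ 2 * (t:ℂ) ^ 2) * (a - Complex.I * b * t))).im ≠ 0) := by
  have hre := integral_sqrtA_segment_re_pos ha1
  have him := integral_sqrtA_imagSegment_im_pos ha1 hb
  have hneg := mul_pos hb him
  exact ⟨hre, him, by linarith, by linarith⟩

theorem stmt14 (a : ℂ) (ha1 : 0 < a.im) (ha2 : a.re ≤ 0) (b : ℝ) (hb : 0 < b) :
    0 < (∫ t in (0:ℝ)..1, sqrtA ((1 - (t:ℂ) ^ 2) * (a - t))).re ∧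
    0 < (∫ t in (0:ℝ)..1,
        sqrtA ((1 + (b:ℂ) ^ 2 * (t:ℂ) ^ 2) * (a - Complex.I * b * t))).im ∧
    -- hence `Re ∫_1^{bi} √(p_a) dz` (over the path `[1,0] ∪ [0,bi]`) is negative, nonzero
    (-(∫ t in (0:ℝ)..1, sqrtA ((1 - (t:ℂ) ^ 2) * (a - t))).re -
        b * (∫ t in (0:ℝ)..1,
          sqrtA ((1 + (b:ℂ) ^ 2 * (t:ℂ) ^ 2) * (a - Complex.I * b * t))).im < 0) ∧
    (-(∫ t in (0:ℝ)..1, sqrtA ((1 - (t:ℂ) ^ 2) * (a - t))).re -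
        b * (∫ t in (0:ℝ)..1,
          sqrtA ((1 + (b:ℂ) ^ 2 * (t:ℂ) ^ 2) * (a - Complex.I * b * t))).im ≠ 0) :=
  stmt14_general a ha1 b hb
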